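/- The pushforward of the standard semicircle law w under the map x ↦ x² is equal to the Marchenko–Pastur law m; that is, w² = m as measures on ℝ. -/

import Mathlib

open MeasureTheory Real

/-- The standard semicircle law: density `(1/(2π)) √(4 − x²)` on `[−2, 2]`. -/
noncomputable def semicircle : Measure ℝ :=
  volume.withDensity (fun x =>
    ENNReal.ofReal (if x ∈ Set.Icc (-2) 2 then (1 / (2 * π)) * Real.sqrt (4 - x ^ 2) else 0))

/-- The Marchenko–Pastur (free Poisson) law: density `(1/(2π)) √((4 − x)/x)` on `(0, 4)`. -/
noncomputable def marchenkoPastur : Measure ℝ :=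
  volume.withDensity (fun x =>
    ENNReal.ofReal (if x ∈ Set.Ioo 0 4 then (1 / (2 * π)) * Real.sqrt ((4 - x) / x) else 0))

/-!
The semicircle density `f` is even, so the pushforward under `x ↦ x²` only sees `f` on `(0, ∞)`,
counted twice. There the substitution `y = x²`, `dy = 2x dx`, turns `2 f(x) dx` into
`f(√y) / √y dy`, and `(1/(2π)) √(4 − y) / √y` is the Marchenko–Pastur density.
-/

open Set
open scoped ENNReal

theorem lintegral_eq_two_mul_setLIntegral_Ioi_of_even {f : ℝ → ℝ≥0∞} (hf : Function.Even f) :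
    ∫⁻ x, f x = 2 * ∫⁻ x in Ioi 0, f x := by
  have h_neg : ∫⁻ x in Iic 0, f x = ∫⁻ x in Ioi 0, f x := by
    calc ∫⁻ x in Iic 0, f x = ∫⁻ x in Iic 0, f (-x) := lintegral_congr fun x => (hf x).symm
      _ = ∫⁻ x in Ici 0, f x := by
        rw [(Measure.measurePreserving_neg volume).setLIntegral_comp_emb measurableEmbedding_neg,
          image_neg_Iic, neg_zero]
      _ = ∫⁻ x in Ioi 0, f x := setLIntegral_congr Ioi_ae_eq_Ici.symm
  rw [← lintegral_add_compl f measurableSet_Ioi, compl_Ioi, h_neg, two_mul]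

theorem image_sq_Ioi : (fun x : ℝ => x ^ 2) '' Ioi 0 = Ioi 0 := by
  refine Subset.antisymm (image_subset_iff.2 fun x (hx : 0 < x) => pow_pos hx 2) fun y hy => ?_
  exact ⟨√y, Real.sqrt_pos.2 hy, Real.sq_sqrt (le_of_lt hy)⟩

theorem setLIntegral_Ioi_comp_sq (g : ℝ → ℝ≥0∞) :
    ∫⁻ x in Ioi 0, ENNReal.ofReal (2 * x) * g (x ^ 2) = ∫⁻ y in Ioi 0, g y := by
  have h_deriv (x : ℝ) (_ : x ∈ Ioi 0) :
      HasDerivWithinAt (fun x : ℝ => x ^ 2) (2 * x) (Ioi 0) x := by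
    simpa using (hasDerivAt_pow 2 x).hasDerivWithinAt
  have h_inj : InjOn (fun x : ℝ => x ^ 2) (Ioi 0) :=
    (pow_left_strictMonoOn₀ two_ne_zero).injOn.mono fun x (hx : 0 < x) => hx.le
  calc ∫⁻ x in Ioi 0, ENNReal.ofReal (2 * x) * g (x ^ 2)
      = ∫⁻ x in Ioi 0, ENNReal.ofReal |2 * x| * g (x ^ 2) :=
        setLIntegral_congr_fun measurableSet_Ioi fun x (hx : 0 < x) => by
          rw [abs_of_pos (by positivity)]
    _ = ∫⁻ y in (· ^ 2) '' Ioi 0, g y :=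
        (lintegral_image_eq_lintegral_abs_deriv_mul measurableSet_Ioi h_deriv h_inj g).symm
    _ = ∫⁻ y in Ioi 0, g y := by rw [image_sq_Ioi]

theorem map_sq_withDensity_of_even {f g : ℝ → ℝ≥0∞} (hf : Function.Even f)
    (hg : ∀ y ≤ 0, g y = 0) (hfg : ∀ x > 0, ENNReal.ofReal x * g (x ^ 2) = f x) :
    (volume.withDensity f).map (· ^ 2) = volume.withDensity g := by
  have h_meas : Measurable fun x : ℝ => x ^ 2 := by fun_prop
  ext s hs
  have h_even : Function.Even (((· ^ 2) ⁻¹' s).indicator f) := by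
    intro x
    have h_mem : -x ∈ (· ^ 2) ⁻¹' s ↔ x ∈ (· ^ 2) ⁻¹' s := by
      rw [mem_preimage, mem_preimage, neg_sq]
    by_cases hx : x ∈ (· ^ 2) ⁻¹' s
    · rw [indicator_of_mem hx, indicator_of_mem (h_mem.2 hx), hf x]
    · rw [indicator_of_notMem hx, indicator_of_notMem (mt h_mem.1 hx)]
  have h_pt (x : ℝ) (hx : 0 < x) :
      ENNReal.ofReal (2 * x) * s.indicator g (x ^ 2) = 2 * ((· ^ 2) ⁻¹' s).indicator f x := by
    by_cases hxs : x ^ 2 ∈ s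
    · rw [indicator_of_mem hxs, indicator_of_mem (show x ∈ (· ^ 2) ⁻¹' s from hxs),
        ENNReal.ofReal_mul zero_le_two, ENNReal.ofReal_ofNat, mul_assoc, hfg x hx]
    · rw [indicator_of_notMem hxs, indicator_of_notMem (show x ∉ (· ^ 2) ⁻¹' s from hxs),
        mul_zero, mul_zero]
  have h_supp : (s.indicator g).support ⊆ Ioi 0 := fun y hy => by
    by_contra hy'
    exact hy (indicator_apply_eq_zero.2 fun _ => hg y (not_lt.1 hy'))
  calc (volume.withDensity f).map (· ^ 2) s = ∫⁻ x, ((· ^ 2) ⁻¹' s).indicator f x := by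
        rw [Measure.map_apply h_meas hs, withDensity_apply _ (h_meas hs),
          lintegral_indicator (h_meas hs)]
    _ = ∫⁻ x in Ioi 0, 2 * ((· ^ 2) ⁻¹' s).indicator f x := by
        rw [lintegral_eq_two_mul_setLIntegral_Ioi_of_even h_even,
          lintegral_const_mul' _ _ ENNReal.ofNat_ne_top]
    _ = ∫⁻ x in Ioi 0, ENNReal.ofReal (2 * x) * s.indicator g (x ^ 2) :=
        (setLIntegral_congr_fun measurableSet_Ioi h_pt).symm
    _ = volume.withDensity g s := by
        rw [setLIntegral_Ioi_comp_sq, setLIntegral_eq_of_support_subset h_supp,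
          lintegral_indicator hs, withDensity_apply _ hs]

noncomputable def semicircleDensity (x : ℝ) : ℝ :=
  if x ∈ Icc (-2) 2 then 1 / (2 * π) * √(4 - x ^ 2) else 0

noncomputable def marchenkoPasturDensity (x : ℝ) : ℝ :=
  if x ∈ Ioo 0 4 then 1 / (2 * π) * √((4 - x) / x) else 0

theorem semicircleDensity_even : Function.Even semicircleDensity := fun x => by
  simp only [semicircleDensity, mem_Icc, ← abs_le, abs_neg, neg_sq]

theorem marchenkoPasturDensity_of_nonpos {y : ℝ} (hy : y ≤ 0) : marchenkoPasturDensity y = 0 :=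
  if_neg fun h => hy.not_gt h.1

theorem mul_marchenkoPasturDensity_sq {x : ℝ} (hx : 0 < x) :
    x * marchenkoPasturDensity (x ^ 2) = semicircleDensity x := by
  rcases lt_or_ge x 2 with hx2 | hx2
  · have h_sq : x ^ 2 ∈ Ioo 0 4 := ⟨by positivity, by nlinarith⟩
    have h_mem : x ∈ Icc (-2) 2 := ⟨by linarith, hx2.le⟩
    rw [marchenkoPasturDensity, semicircleDensity, if_pos h_sq, if_pos h_mem,
      Real.sqrt_div' _ (by positivity), Real.sqrt_sq hx.le]
    field_simp
  · have h_sq : x ^ 2 ∉ Ioo 0 4 := fun h => by nlinarith [h.2]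
    have h_sqrt : √(4 - x ^ 2) = 0 := Real.sqrt_eq_zero'.2 (by nlinarith)
    simp [marchenkoPasturDensity, semicircleDensity, h_sq, h_sqrt]

theorem semicircle_sq_eq_marchenkoPastur :
    Measure.map (fun x : ℝ => x ^ 2) semicircle = marchenkoPastur :=
  map_sq_withDensity_of_even (f := fun x => ENNReal.ofReal (semicircleDensity x))
    (g := fun y => ENNReal.ofReal (marchenkoPasturDensity y))
    (semicircleDensity_even.left_comp ENNReal.ofReal)
    (fun y hy => by rw [marchenkoPasturDensity_of_nonpos hy, ENNReal.ofReal_zero])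
    (fun x hx => by rw [← ENNReal.ofReal_mul hx.le, mul_marchenkoPasturDensity_sq hx])
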